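/- The sum, over all partitions σ of {1,...,n} into exactly k blocks, of the product over blocks τ of σ of |τ|^{|τ|−1}, equals C(n−1, k−1) · n^{n−k}. -/

import Mathlib

/-!
Let `P_s(x) = ∑_σ ∏_{τ ∈ σ} x |τ|^{|τ|-1}`, the sum over all partitions `σ` of a finite set `s`;
then `P_s(x) = x (x + m)^{m-1}` when `|s| = m ≥ 1`, and the theorem is its coefficient of `x^k`.
Splitting off the block `insert a u` that contains a fixed point `a` gives
`P_{insert a t}(x) = ∑_{u ⊆ t} x (|u|+1)^{|u|} P_{t \ u}(x)`, and by induction the right-hand side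
is `x ∑_j C(m,j) (1+j)^j A_{m-j}(x)` with `A_n(x) = x (x+n)^{n-1}`, which equals `x (x+1+m)^m` by
Abel's identity `∑_j C(n,j) A_{n-j}(x) (y+j)^j = (x+y+n)^n`.

Abel's identity is proved by induction on `n`: its `y`-derivative is `n` times the identity for
`n - 1` at `y + 1`, and at `y = -(x+n)` the left side becomes an `n`-th forward difference of a
polynomial of degree `n - 1`, hence vanishes.
-/

open Finset
open scoped Classical

/-- `σ` is a partition of `{1,...,n}` into exactly `k` (non-empty, pairwise disjoint)
blocks whose union is all of `{1,...,n}`. -/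
def IsPartitionInto {n : ℕ} (σ : Finset (Finset (Fin n))) (k : ℕ) : Prop :=
  (∀ τ ∈ σ, τ.Nonempty) ∧
  (∀ τ₁ ∈ σ, ∀ τ₂ ∈ σ, τ₁ ≠ τ₂ → Disjoint τ₁ τ₂) ∧
  σ.biUnion id = univ ∧ σ.card = k

section Abel

open Polynomial

variable {R : Type*} [CommRing R]

def abelPoly (x : R) (n : ℕ) : R :=
  if n = 0 then 1 else x * (x + n) ^ (n - 1)

@[simp]
lemma abelPoly_zero (x : R) : abelPoly x 0 = 1 := if_pos rfl

lemma abelPoly_succ (x : R) (n : ℕ) : abelPoly x (n + 1) = x * (x + (n + 1 : ℕ)) ^ n := by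
  simp [abelPoly]

lemma abelPoly_sub_mul_pow {x : R} {j n : ℕ} (hj : j ≤ n) (hn : n ≠ 0) :
    abelPoly x (n - j) * (j - (x + n)) ^ j = -((-1) ^ (n - j) * x * (j - (x + n)) ^ (n - 1)) := by
  obtain rfl | hlt := hj.eq_or_lt
  · obtain ⟨m, rfl⟩ := Nat.exists_eq_succ_of_ne_zero hn
    simp only [Nat.sub_self, abelPoly_zero, Nat.succ_sub_one, pow_succ]
    ring
  · obtain ⟨k, rfl⟩ := Nat.exists_eq_add_of_lt hlt
    have hx : (x + (k + 1 : ℕ) : R) = -(j - (x + (j + k + 1 : ℕ))) := by push_cast; ring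
    rw [show j + k + 1 - j = k + 1 by omega, abelPoly_succ, hx, Nat.add_sub_cancel,
      neg_pow (_ - _) k, pow_succ (-1 : R) k, pow_add]
    ring

lemma sum_choose_mul_abelPoly_sub_mul_pow (x : R) {n : ℕ} (hn : n ≠ 0) :
    ∑ j ∈ range (n + 1), (n.choose j : R) * abelPoly x (n - j) * (j - (x + n)) ^ j = 0 :=
  calc ∑ j ∈ range (n + 1), (n.choose j : R) * abelPoly x (n - j) * (j - (x + n)) ^ j
      = -x * ∑ j ∈ range (n + 1),
          ((-1 : ℤ) ^ (n - j) * n.choose j) • ((0 + j • (1 : R)) + -(x + n)) ^ (n - 1) := by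
        rw [mul_sum]
        refine sum_congr rfl fun j hj => ?_
        rw [mul_assoc, abelPoly_sub_mul_pow (Nat.lt_succ_iff.1 (mem_range.1 hj)) hn]
        simp only [zsmul_eq_mul, nsmul_eq_mul, Int.cast_mul, Int.cast_pow, Int.cast_neg,
          Int.cast_one, Int.cast_natCast, mul_one, zero_add]
        ring
    _ = -x * (fwdDiff 1)^[n] (fun r : R => (r + -(x + n)) ^ (n - 1)) 0 := by
        rw [fwdDiff_iter_eq_sum_shift]
    _ = 0 := by
        rw [fwdDiff_iter_comp_add 1 (fun r : R => r ^ (n - 1)),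
          fwdDiff_iter_pow_eq_zero_of_lt (by omega), Pi.zero_apply, mul_zero]

-- The left side of Abel's identity as a polynomial in `y`, evaluated at `y + c`; the shift `c`
-- makes its derivative a sum of the same kind (`derivative_abelSum`).
noncomputable def abelSum (x c : R) (n : ℕ) : R[X] :=
  ∑ j ∈ range (n + 1), C (n.choose j * abelPoly x (n - j)) * (X + C (c + j)) ^ j

lemma derivative_abelSum (x c : R) (m : ℕ) :
    derivative (abelSum x c (m + 1)) = C ((m + 1 : ℕ) : R) * abelSum x (c + 1) m := by
  rw [abelSum, abelSum, derivative_sum, sum_range_succ', mul_sum]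
  simp only [derivative_C_mul, derivative_X_add_C_pow, Nat.cast_zero, map_zero, zero_mul,
    mul_zero, add_zero, Nat.add_sub_add_right, Nat.add_sub_cancel]
  refine sum_congr rfl fun i _ => ?_
  have hchoose : ((m + 1).choose (i + 1) : R[X]) * (i + 1 : ℕ) = (m + 1 : ℕ) * m.choose i := by
    simpa using congrArg (Nat.cast : ℕ → R[X]) (Nat.add_one_mul_choose_eq m i).symm
  have hc : c + ((i + 1 : ℕ) : R) = c + 1 + i := by push_cast; ring
  simp only [hc, map_mul, map_natCast]
  linear_combination (C (abelPoly x (m - i)) * (X + C (c + 1 + i)) ^ i) * hchoose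

lemma eval_abelSum_eq_zero (x c : R) {n : ℕ} (hn : n ≠ 0) :
    (abelSum x c n).eval (-(x + c + n)) = 0 := by
  rw [abelSum, eval_finsetSum, ← sum_choose_mul_abelPoly_sub_mul_pow x hn]
  refine sum_congr rfl fun j _ => ?_
  simp only [eval_mul, eval_C, eval_pow, eval_add, eval_X]
  ring

theorem abelSum_eq [IsAddTorsionFree R] (x c : R) (n : ℕ) :
    abelSum x c n = (X + C (x + c + n)) ^ n := by
  induction n generalizing c with
  | zero => simp [abelSum]
  | succ m ih =>
    have hderiv :
        derivative (abelSum x c (m + 1) - (X + C (x + c + (m + 1 : ℕ))) ^ (m + 1)) = 0 := by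
      rw [derivative_sub, derivative_abelSum, ih, derivative_X_add_C_pow, Nat.add_sub_cancel]
      push_cast
      ring_nf
    have hconst := eq_C_of_derivative_eq_zero hderiv
    have heval := congrArg (eval (-(x + c + (m + 1 : ℕ)))) hconst
    rw [eval_C, eval_sub, eval_abelSum_eq_zero x c m.succ_ne_zero, eval_pow, eval_add, eval_X,
      eval_C, neg_add_cancel, zero_pow m.succ_ne_zero, sub_zero] at heval
    rw [← sub_eq_zero, hconst, ← heval, map_zero]

theorem abel_identity [IsAddTorsionFree R] (x y : R) (n : ℕ) :
    ∑ j ∈ range (n + 1), n.choose j * abelPoly x (n - j) * (y + j) ^ j = (x + y + n) ^ n := by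
  simpa [abelSum, eval_finsetSum] using congrArg (eval 0) (abelSum_eq x y n)

end Abel

section Partitions

variable {α : Type*} [DecidableEq α]

def partitions (s : Finset α) : Finset (Finset (Finset α)) :=
  s.powerset.powerset.filter fun σ =>
    (∀ τ ∈ σ, τ.Nonempty) ∧ (∀ τ₁ ∈ σ, ∀ τ₂ ∈ σ, τ₁ ≠ τ₂ → Disjoint τ₁ τ₂) ∧ σ.biUnion id = s

variable {s τ : Finset α} {σ : Finset (Finset α)} {a : α}

lemma mem_partitions : σ ∈ partitions s ↔
    (∀ τ ∈ σ, τ.Nonempty) ∧ (∀ τ₁ ∈ σ, ∀ τ₂ ∈ σ, τ₁ ≠ τ₂ → Disjoint τ₁ τ₂) ∧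
      σ.biUnion id = s := by
  refine mem_filter.trans ⟨And.right, fun h => ⟨mem_powerset.2 fun τ hτ => ?_, h⟩⟩
  rw [mem_powerset, ← h.2.2]
  exact subset_biUnion_of_mem id hτ

lemma subset_of_mem_partitions (hσ : σ ∈ partitions s) (hτ : τ ∈ σ) : τ ⊆ s := by
  rw [← (mem_partitions.1 hσ).2.2]
  exact subset_biUnion_of_mem id hτ

lemma partitions_empty : partitions (∅ : Finset α) = {∅} := by
  ext σ
  refine ⟨fun hσ => mem_singleton.2 <| eq_empty_of_forall_notMem fun τ hτ => ?_,
    fun hσ => by simp [mem_singleton.1 hσ, mem_partitions]⟩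
  obtain ⟨b, hb⟩ := (mem_partitions.1 hσ).1 τ hτ
  exact notMem_empty b (subset_of_mem_partitions hσ hτ hb)

lemma exists_mem_of_mem_partitions (hσ : σ ∈ partitions s) (ha : a ∈ s) : ∃ τ ∈ σ, a ∈ τ := by
  rw [← (mem_partitions.1 hσ).2.2] at ha
  simpa using ha

lemma insert_mem_partitions (hσ : σ ∈ partitions s) (hτ : τ.Nonempty) (hτs : Disjoint τ s) :
    insert τ σ ∈ partitions (τ ∪ s) := by
  obtain ⟨hne, hdisj, hcover⟩ := mem_partitions.1 hσ
  have hτσ : ∀ υ ∈ σ, Disjoint τ υ := fun υ hυ => hτs.mono_right (subset_of_mem_partitions hσ hυ)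
  refine mem_partitions.2 ⟨?_, ?_, by rw [biUnion_insert, hcover, id]⟩
  · simpa [hτ] using hne
  · simp only [mem_insert]
    rintro τ₁ (rfl | h₁) τ₂ (rfl | h₂) hne
    · exact absurd rfl hne
    · exact hτσ τ₂ h₂
    · exact (hτσ τ₁ h₁).symm
    · exact hdisj τ₁ h₁ τ₂ h₂ hne

lemma erase_mem_partitions (hσ : σ ∈ partitions s) (hτ : τ ∈ σ) :
    σ.erase τ ∈ partitions (s \ τ) := by
  obtain ⟨hne, hdisj, hcover⟩ := mem_partitions.1 hσ
  refine mem_partitions.2 ⟨fun υ hυ => hne υ (mem_of_mem_erase hυ),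
    fun τ₁ h₁ τ₂ h₂ => hdisj τ₁ (mem_of_mem_erase h₁) τ₂ (mem_of_mem_erase h₂), ?_⟩
  conv_rhs => rw [← hcover, ← insert_erase hτ]
  rw [biUnion_insert, id, union_sdiff_left, sdiff_eq_self_of_disjoint]
  exact (disjoint_biUnion_left _ _ _).2 fun υ hυ =>
    hdisj υ (mem_of_mem_erase hυ) τ hτ (ne_of_mem_erase hυ)

lemma notMem_of_mem_partitions (hσ : σ ∈ partitions s) (haτ : a ∈ τ) (ha : a ∉ s) : τ ∉ σ :=
  fun hτ => ha (subset_of_mem_partitions hσ hτ haτ)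

lemma sum_partitions_insert {M : Type*} [AddCommMonoid M] {t : Finset α} (ha : a ∉ t)
    (f : Finset (Finset α) → M) :
    ∑ σ ∈ partitions (insert a t), f σ =
      ∑ u ∈ t.powerset, ∑ σ ∈ partitions (t \ u), f (insert (insert a u) σ) := by
  have hrest : ∀ {u}, a ∉ t \ u := fun h => ha (mem_sdiff.1 h).1
  rw [sum_sigma']
  symm
  refine sum_bij (fun p _ => insert (insert a p.1) p.2) ?_ ?_ ?_ (fun _ _ => rfl)
  · rintro ⟨u, σ⟩ hp
    obtain ⟨hu, hσ⟩ := mem_sigma.1 hp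
    have hdisj : Disjoint (insert a u) (t \ u) := disjoint_insert_left.2 ⟨hrest, disjoint_sdiff⟩
    simpa only [insert_union, union_sdiff_of_subset (mem_powerset.1 hu)] using
      insert_mem_partitions hσ (insert_nonempty a u) hdisj
  · rintro ⟨u, σ⟩ hp ⟨u', σ'⟩ hp' (heq : insert (insert a u) σ = insert (insert a u') σ')
    simp only [mem_sigma, mem_powerset] at hp hp'
    obtain ⟨hu, hσ⟩ := hp
    obtain ⟨hu', hσ'⟩ := hp'
    have hnotMem : insert a u ∉ σ := notMem_of_mem_partitions hσ (mem_insert_self a u) hrest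
    have hnotMem' : insert a u' ∉ σ' := notMem_of_mem_partitions hσ' (mem_insert_self a u') hrest
    have hblock : insert a u = insert a u' := by
      have h := heq ▸ mem_insert_self (insert a u) σ
      exact (mem_insert.1 h).resolve_right
        (notMem_of_mem_partitions hσ' (mem_insert_self a u) hrest)
    have hu_eq : u = u' := by
      rw [← erase_insert fun h => ha (hu h), hblock, erase_insert fun h => ha (hu' h)]
    subst hu_eq
    have hσ_eq : σ = σ' := by
      rw [← erase_insert hnotMem, heq, erase_insert hnotMem']
    rw [hσ_eq]
  · intro σ hσ
    obtain ⟨τ, hτ, haτ⟩ := exists_mem_of_mem_partitions hσ (mem_insert_self a t)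
    have hτt : τ ⊆ insert a t := subset_of_mem_partitions hσ hτ
    have hsdiff : insert a t \ τ = t \ τ.erase a := by
      ext b
      by_cases hb : b = a <;> simp [hb, haτ, ha]
    refine ⟨⟨τ.erase a, σ.erase τ⟩, mem_sigma.2 ⟨?_, ?_⟩, ?_⟩
    · exact mem_powerset.2 (subset_insert_iff.1 hτt)
    · exact hsdiff ▸ erase_mem_partitions hσ hτ
    · simp only [insert_erase haτ, insert_erase hτ]

end Partitions

section GeneratingFunction

open Polynomial

variable {R : Type*} [CommRing R]

theorem sum_partitions_prod_eq_abelPoly [IsAddTorsionFree R] {α : Type*} [DecidableEq α]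
    (x : R) (s : Finset α) :
    ∑ σ ∈ partitions s, ∏ τ ∈ σ, x * ((#τ ^ (#τ - 1) : ℕ) : R) = abelPoly x #s := by
  induction s using Finset.strongInduction with
  | H s ih =>
  rcases s.eq_empty_or_nonempty with rfl | ⟨a, ha⟩
  · simp [partitions_empty]
  obtain ⟨t, hat, rfl⟩ : ∃ t, a ∉ t ∧ insert a t = s :=
    ⟨s.erase a, notMem_erase a s, insert_erase ha⟩
  have hblock : ∀ u ∈ t.powerset, ∑ σ ∈ partitions (t \ u), ∏ τ ∈ insert (insert a u) σ,
      x * ((#τ ^ (#τ - 1) : ℕ) : R) = x * ((#u + 1) ^ #u : ℕ) * abelPoly x (#t - #u) := by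
    intro u hu
    rw [mem_powerset] at hu
    have hau : a ∉ u := fun h => hat (hu h)
    have hrest : a ∉ t \ u := fun h => hat (mem_sdiff.1 h).1
    have hsub : t \ u ⊂ insert a t := sdiff_subset.trans_ssubset (ssubset_insert hat)
    rw [← card_sdiff_of_subset hu, ← ih _ hsub, mul_sum]
    refine sum_congr rfl fun σ hσ => ?_
    rw [prod_insert (notMem_of_mem_partitions hσ (mem_insert_self a u) hrest),
      card_insert_of_notMem hau, Nat.add_sub_cancel]
  calc ∑ σ ∈ partitions (insert a t), ∏ τ ∈ σ, x * ((#τ ^ (#τ - 1) : ℕ) : R)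
      = ∑ u ∈ t.powerset, x * ((#u + 1) ^ #u : ℕ) * abelPoly x (#t - #u) := by
        rw [sum_partitions_insert hat]
        exact sum_congr rfl hblock
    _ = ∑ j ∈ range (#t + 1), (#t).choose j • (x * ((j + 1) ^ j : ℕ) * abelPoly x (#t - j)) :=
        sum_powerset_apply_card fun j => x * ((j + 1) ^ j : ℕ) * abelPoly x (#t - j)
    _ = x * (x + 1 + #t) ^ #t := by
        rw [← abel_identity x 1 #t, mul_sum]
        refine sum_congr rfl fun j _ => ?_
        rw [nsmul_eq_mul]
        push_cast
        ring
    _ = abelPoly x #(insert a t) := by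
        rw [card_insert_of_notMem hat, abelPoly_succ]
        push_cast
        ring

lemma coeff_abelPoly_X {n k : ℕ} (hn : n ≠ 0) (hk : k ≠ 0) :
    (abelPoly (X : R[X]) n).coeff k = ((n - 1).choose (k - 1) * n ^ (n - k) : ℕ) := by
  obtain ⟨m, rfl⟩ : ∃ m, n = m + 1 := ⟨n - 1, by omega⟩
  obtain ⟨l, rfl⟩ : ∃ l, k = l + 1 := ⟨k - 1, by omega⟩
  rw [abelPoly_succ, ← C_eq_natCast, coeff_X_mul, coeff_X_add_C_pow]
  push_cast [Nat.add_sub_cancel, Nat.add_sub_add_right]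
  ring

theorem sum_partitions_with_card_prod {α : Type*} [DecidableEq α] {s : Finset α}
    (hs : s.Nonempty) {k : ℕ} (hk : k ≠ 0) :
    ∑ σ ∈ partitions s with #σ = k, ∏ τ ∈ σ, #τ ^ (#τ - 1) =
      (#s - 1).choose (k - 1) * #s ^ (#s - k) := by
  have hcoeff := congrArg (coeff · k) (sum_partitions_prod_eq_abelPoly (X : ℤ[X]) s)
  simp only [coeff_abelPoly_X hs.card_pos.ne' hk, prod_mul_distrib, prod_const, ← Nat.cast_prod,
    finsetSum_coeff, mul_comm (X ^ _), coeff_natCast_mul, coeff_X_pow, mul_ite, mul_one,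
    mul_zero, eq_comm (a := k), ← sum_filter, ← Nat.cast_sum, Nat.cast_inj] at hcoeff
  exact hcoeff

end GeneratingFunction

/-- Second partition identity: summing, over all partitions of `{1,...,n}` into `k` blocks,
the product over blocks `τ` of `|τ|^{|τ|-1}` gives `C(n-1,k-1) · n^{n-k}`. -/
theorem second_partition_identity (n k : ℕ) (hk : 1 ≤ k) (hkn : k ≤ n) :
    ∑ σ ∈ (univ : Finset (Finset (Finset (Fin n)))).filter (fun σ => IsPartitionInto σ k),
      ∏ τ ∈ σ, τ.card ^ (τ.card - 1)
    = (n - 1).choose (k - 1) * n ^ (n - k) := by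
  have hfilter : {σ ∈ partitions (univ : Finset (Fin n)) | #σ = k} =
      {σ ∈ (univ : Finset (Finset (Finset (Fin n)))) | IsPartitionInto σ k} := by
    ext σ
    rw [mem_filter, mem_filter, mem_partitions, IsPartitionInto]
    simp only [mem_univ, true_and, and_assoc]
  have hne : (univ : Finset (Fin n)).Nonempty := univ_nonempty_iff.2 ⟨⟨0, by omega⟩⟩
  simpa [hfilter] using sum_partitions_with_card_prod hne (by omega : k ≠ 0)
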